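/- arXiv:2505.01551 — 4 statements merged into one kernel-verified Lean document; each statement's English description precedes it below -/
import Mathlib

section
/- Let F : ℝ → ℝ be Lipschitz continuous, let ε > 0, and let γ denote the standard Gaussian measure on ℝ (mean 0, variance 1). Define the smoothed function F_ε(θ) = ∫ F(θ + ε z) dγ(z). Then F_ε is differentiable at every θ ∈ ℝ, and its derivative is given by the score-function formula F_ε'(θ) = (1/ε) ∫ F(θ + ε z) · z dγ(z). -/
/-!
Writing `y = t + ε z`, the smoothed function is `∫ F(y) φ_t(y) dy` with `φ_t` the density of
`𝒩(t, ε²)`, so the parameter `t` sits only in the density, whose `t`-derivative is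
`(y - t)/ε² · φ_t(y)`. Differentiation under the integral is justified by domination: for
`|t - θ| ≤ 1` the density `φ_t` is bounded by a constant multiple of the density of `𝒩(θ, 4ε²)`,
which integrates the quadratic growth of `F(y) (y - t)` coming from the Lipschitz bound.
Substituting back, `(y - θ)/ε² = z/ε`.
-/

open MeasureTheory ProbabilityTheory Real NNReal ENNReal

lemma LipschitzWith.abs_le_add_mul_abs_sub {K : ℝ≥0} {g : ℝ → ℝ} (hg : LipschitzWith K g)
    (x₀ x : ℝ) : |g x| ≤ |g x₀| + K * |x - x₀| := by
  have := hg.dist_le_mul x x₀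
  rw [Real.dist_eq, Real.dist_eq] at this
  linarith [abs_sub_abs_le_abs_sub (g x) (g x₀)]

namespace ProbabilityTheory

lemma hasDerivAt_gaussianPDFReal_mean (μ : ℝ) (v : ℝ≥0) (x : ℝ) :
    HasDerivAt (fun m => gaussianPDFReal m v x) ((x - μ) / v * gaussianPDFReal μ v x) μ := by
  have hexp : HasDerivAt (fun m => -(x - m) ^ 2 / (2 * v)) ((x - μ) / v) μ := by
    refine ((((hasDerivAt_id' μ).const_sub x).pow 2).neg.div_const (2 * (v : ℝ))).congr_deriv ?_
    rcases eq_or_ne (v : ℝ) 0 with hv | hv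
    · simp [hv]
    · field_simp
      ring
  refine (hexp.exp.const_mul (√(2 * π * v))⁻¹).congr_deriv ?_
  rw [gaussianPDFReal]
  ring

lemma gaussianPDFReal_le_of_abs_sub_le {μ μ₀ r : ℝ} {v : ℝ≥0} (hv : v ≠ 0)
    (h : |μ - μ₀| ≤ r) (x : ℝ) :
    gaussianPDFReal μ v x ≤ 2 * exp (r ^ 2 / (2 * v)) * gaussianPDFReal μ₀ (4 * v) x := by
  have hr : (μ - μ₀) ^ 2 ≤ r ^ 2 := by
    simpa only [sq_abs] using pow_le_pow_left₀ (abs_nonneg _) h 2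
  have hsqrt : √(2 * π * ((4 * v : ℝ≥0) : ℝ)) = 2 * √(2 * π * v) := by
    rw [show 2 * π * ((4 * v : ℝ≥0) : ℝ) = 2 ^ 2 * (2 * π * v) by push_cast; ring,
      sqrt_mul' _ (by positivity), sqrt_sq zero_le_two]
  have hexp : -(x - μ) ^ 2 / (2 * v) ≤ r ^ 2 / (2 * v) + -(x - μ₀) ^ 2 / (2 * (4 * v)) := by
    have hgap : r ^ 2 / (2 * v) + -(x - μ₀) ^ 2 / (2 * (4 * v)) - -(x - μ) ^ 2 / (2 * v)
        = (4 * r ^ 2 + 4 * (x - μ) ^ 2 - (x - μ₀) ^ 2) / (8 * v) := by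
      field_simp
      ring
    have hnum : (x - μ₀) ^ 2 ≤ 4 * r ^ 2 + 4 * (x - μ) ^ 2 := by
      nlinarith [sq_nonneg (x - μ - (μ - μ₀))]
    have := div_nonneg (sub_nonneg.2 hnum) (by positivity : (0 : ℝ) ≤ 8 * v)
    linarith
  simp only [gaussianPDFReal, hsqrt]
  calc (√(2 * π * v))⁻¹ * exp (-(x - μ) ^ 2 / (2 * v))
      ≤ (√(2 * π * v))⁻¹ * exp (r ^ 2 / (2 * v) + -(x - μ₀) ^ 2 / (2 * (4 * v))) := by
        gcongr
    _ = _ := by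
        rw [exp_add]
        push_cast
        field_simp

lemma integrable_gaussianReal_iff {μ : ℝ} {v : ℝ≥0} (hv : v ≠ 0) {f : ℝ → ℝ} :
    Integrable f (gaussianReal μ v) ↔ Integrable (fun x => gaussianPDFReal μ v x * f x) := by
  rw [gaussianReal_of_var_ne_zero _ hv, integrable_withDensity_iff_integrable_smul'
    (measurable_gaussianPDF μ v) (ae_of_all _ fun _ => gaussianPDF_lt_top)]
  simp only [toReal_gaussianPDF, smul_eq_mul]

lemma memLp_const_add_mul_abs_sub_gaussianReal (μ : ℝ) (v : ℝ≥0) (a b c : ℝ) {p : ℝ≥0∞}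
    (hp : p ≠ ∞) : MemLp (fun x => a + b * |x - c|) p (gaussianReal μ v) :=
  (memLp_const a).add ((((memLp_id_gaussianReal' p hp).sub (memLp_const c)).norm).const_mul b)

lemma integral_gaussianReal_comp_const_add_mul {E : Type*} [NormedAddCommGroup E]
    [NormedSpace ℝ E] (f : ℝ → E) {c : ℝ} (hc : c ≠ 0) (t μ : ℝ) (v : ℝ≥0) :
    ∫ z, f (t + c * z) ∂gaussianReal μ v
      = ∫ y, f y ∂gaussianReal (t + c * μ) (.mk (c ^ 2) (sq_nonneg c) * v) := by
  have hmap : (gaussianReal μ v).map (fun z => t + c * z)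
      = gaussianReal (t + c * μ) (.mk (c ^ 2) (sq_nonneg c) * v) := by
    rw [show (fun z => t + c * z) = (t + ·) ∘ (c * ·) from rfl,
      ← Measure.map_map (measurable_const_add t) (measurable_const_mul c),
      gaussianReal_map_const_mul, gaussianReal_map_const_add, add_comm]
  rw [← hmap]
  exact ((measurableEmbedding_addLeft t).comp (measurableEmbedding_mulLeft₀ hc)
    |>.integral_map f).symm

@[fun_prop]
lemma continuous_gaussianPDFReal (μ : ℝ) (v : ℝ≥0) : Continuous (gaussianPDFReal μ v) := by
  unfold gaussianPDFReal
  fun_prop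

theorem hasDerivAt_integral_mul_gaussianPDFReal {g : ℝ → ℝ} {v : ℝ≥0} (hv : v ≠ 0)
    {μ₀ A B : ℝ} (hg_meas : AEStronglyMeasurable g) (hg : ∀ x, |g x| ≤ A + B * |x - μ₀|) :
    HasDerivAt (fun μ => ∫ x, g x * gaussianPDFReal μ v x)
      (∫ x, g x * ((x - μ₀) / v * gaussianPDFReal μ₀ v x)) μ₀ := by
  have hint : Integrable (fun x => g x * gaussianPDFReal μ₀ v x) := by
    have hgrowth := (memLp_const_add_mul_abs_sub_gaussianReal μ₀ v A B μ₀ one_ne_top).integrable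
      le_rfl
    refine ((integrable_gaussianReal_iff hv).1 hgrowth).mono'
      (hg_meas.mul (continuous_gaussianPDFReal μ₀ v).aestronglyMeasurable) (ae_of_all _ fun x => ?_)
    rw [Real.norm_eq_abs, abs_mul, abs_of_nonneg (gaussianPDFReal_nonneg ..), mul_comm]
    exact mul_le_mul_of_nonneg_left (hg x) (gaussianPDFReal_nonneg ..)
  set C : ℝ := 2 * exp (1 ^ 2 / (2 * v)) / v
  set bound : ℝ → ℝ := fun x =>
    C * (gaussianPDFReal μ₀ (4 * v) x * ((A + B * |x - μ₀|) * (1 + 1 * |x - μ₀|)))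
  have hbound_int : Integrable bound := by
    refine ((integrable_gaussianReal_iff (by simpa using hv)).1 ?_).const_mul C
    exact (memLp_const_add_mul_abs_sub_gaussianReal μ₀ _ A B μ₀ (p := 2) ofNat_ne_top).integrable_mul
      (memLp_const_add_mul_abs_sub_gaussianReal μ₀ _ 1 1 μ₀ (p := 2) ofNat_ne_top)
  have hderiv_le : ∀ x, ∀ μ ∈ Metric.closedBall μ₀ 1,
      ‖g x * ((x - μ) / v * gaussianPDFReal μ v x)‖ ≤ bound x := by
    intro x μ hμ
    have hμ' : |μ - μ₀| ≤ 1 := by simpa [Real.dist_eq] using hμ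
    have hx : |x - μ| ≤ 1 + 1 * |x - μ₀| := by
      linarith [abs_sub_le x μ₀ μ, abs_sub_comm μ₀ μ]
    have hgx := hg x
    have hgrowth_nonneg : 0 ≤ A + B * |x - μ₀| := (abs_nonneg _).trans hgx
    have hpdf := gaussianPDFReal_le_of_abs_sub_le hv hμ' x
    have hpdf_nonneg := gaussianPDFReal_nonneg μ v x
    calc ‖g x * ((x - μ) / v * gaussianPDFReal μ v x)‖
        = |g x| * (|x - μ| / v * gaussianPDFReal μ v x) := by
          rw [Real.norm_eq_abs, abs_mul, abs_mul, abs_div, NNReal.abs_eq,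
            abs_of_nonneg (gaussianPDFReal_nonneg ..)]
      _ ≤ (A + B * |x - μ₀|) * ((1 + 1 * |x - μ₀|) / v *
            (2 * exp (1 ^ 2 / (2 * v)) * gaussianPDFReal μ₀ (4 * v) x)) := by
          gcongr
      _ = bound x := by ring
  have hscore_cont : Continuous fun x => (x - μ₀) / v * gaussianPDFReal μ₀ v x := by fun_prop
  exact (hasDerivAt_integral_of_dominated_loc_of_deriv_le (Metric.closedBall_mem_nhds μ₀ one_pos)
    (.of_forall fun μ => hg_meas.mul (continuous_gaussianPDFReal μ v).aestronglyMeasurable) hint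
    (hg_meas.mul hscore_cont.aestronglyMeasurable) (ae_of_all _ hderiv_le) hbound_int
    (ae_of_all _ fun x μ _ => (hasDerivAt_gaussianPDFReal_mean μ v x).const_mul (g x))).2

end ProbabilityTheory

/-- Gaussian smoothing of a Lipschitz function is differentiable, with derivative given by
the score-function formula:
`F_ε'(θ) = (1/ε) ∫ F(θ + ε z) z dγ(z)` where `γ` is the standard Gaussian on `ℝ`. -/
theorem gaussian_smoothing_hasDerivAt
    (F : ℝ → ℝ) {K : NNReal} (hF : LipschitzWith K F)
    (ε : ℝ) (hε : 0 < ε) (θ : ℝ) :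
    HasDerivAt (fun t => ∫ z, F (t + ε * z) ∂(gaussianReal 0 1))
      ((1 / ε) * ∫ z, F (θ + ε * z) * z ∂(gaussianReal 0 1)) θ := by
  set v : ℝ≥0 := .mk (ε ^ 2) (sq_nonneg ε)
  have hv : v ≠ 0 := by simpa [v, ← NNReal.coe_ne_zero] using hε.ne'
  have hsmooth (f : ℝ → ℝ) (t : ℝ) :
      ∫ z, f (t + ε * z) ∂gaussianReal 0 1 = ∫ y, f y * gaussianPDFReal t v y := by
    rw [integral_gaussianReal_comp_const_add_mul f hε.ne', mul_zero, add_zero, mul_one,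
      integral_gaussianReal_eq_integral_smul hv]
    simp only [smul_eq_mul, mul_comm]
  have hscore : ∫ z, F (θ + ε * z) * z ∂gaussianReal 0 1
      = ∫ y, F y * ((y - θ) / ε) * gaussianPDFReal θ v y := by
    rw [← hsmooth]
    congr with z
    field_simp
    ring
  convert hasDerivAt_integral_mul_gaussianPDFReal hv hF.continuous.aestronglyMeasurable
    (hF.abs_le_add_mul_abs_sub θ) using 1
  · exact funext (hsmooth F)
  · rw [hscore, ← integral_const_mul]
    congr with y
    simp only [v, NNReal.coe_mk]
    field_simp
end

section
/- Let F : ℝ → ℝ be Lipschitz continuous, let ε > 0, and let γ denote the standard Gaussian measure on ℝ (mean 0, variance 1). Define F_ε(θ) = ∫ F(θ + ε z) dγ(z). Then F_ε is twice differentiable at every θ ∈ ℝ, and its second derivative is given by F_ε''(θ) = (1/ε²) ∫ F(θ + ε z) · (z² − 1) dγ(z). -/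
open MeasureTheory ProbabilityTheory Real Asymptotics Filter

/-!
Substituting `y = θ + ε z` writes `F_ε(θ) = ∫ φ(y - θ) F(y) dy` with `φ` the `N(0, ε²)` density,
so `θ` only enters through the kernel. The density and its first two derivatives are quadratic
polynomials times `exp (-a u²)`, hence `O(exp (-(a/2) u²))`, while a Lipschitz `F` grows at most
linearly. For `|t - θ| < 1` the shifted weight obeys
`exp (-a (y-t)²) ≤ exp a · exp (-(a/2) (y-θ)²)`, which dominates the differentiated integrands
uniformly, so we may differentiate twice under the integral sign. Undoing the substitution,
`φ''(ε z) = φ(ε z) (z² - 1) / ε²`.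
-/

lemma exp_neg_mul_sq_sub_le {a t θ : ℝ} (ha : 0 ≤ a) (ht : |t - θ| ≤ 1) (y : ℝ) :
    exp (-a * (y - t) ^ 2) ≤ exp a * exp (-(a / 2) * (y - θ) ^ 2) := by
  rw [← exp_add, exp_le_exp]
  have hsq : (y - θ) ^ 2 ≤ 2 * (y - t) ^ 2 + 2 := by
    nlinarith [sq_nonneg (y - t - (t - θ)), sq_abs (t - θ), abs_nonneg (t - θ)]
  nlinarith

lemma integrable_exp_neg_mul_sq_sub_mul {b : ℝ} (hb : 0 < b) (θ A B : ℝ) :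
    Integrable fun y => exp (-b * (y - θ) ^ 2) * (A + B * |y|) := by
  have h : Integrable fun x => exp (-b * x ^ 2) * (A + B * |x + θ|) := by
    refine (((integrable_exp_neg_mul_sq hb).const_mul (|A| + |B| * |θ|)).add
      ((integrable_mul_exp_neg_mul_sq hb).norm.const_mul |B|)).mono' (by fun_prop)
      (ae_of_all _ fun x => ?_)
    have hAB : |A + B * (|x + θ|)| ≤ |A| + |B| * |θ| + |B| * |x| := by
      calc |A + B * (|x + θ|)| ≤ |A| + |B| * |x + θ| := by
            simpa [abs_mul] using abs_add_le A (B * |x + θ|)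
        _ ≤ |A| + |B| * (|x| + |θ|) := by gcongr; exact abs_add_le x θ
        _ = |A| + |B| * |θ| + |B| * |x| := by ring
    simp only [Pi.add_apply, norm_mul, norm_of_nonneg (exp_pos _).le, Real.norm_eq_abs]
    nlinarith [exp_pos (-b * x ^ 2)]
  simpa using h.comp_sub_right θ

lemma exists_integrable_bound_comp_sub_mul {k F : ℝ → ℝ} {a A B : ℝ} (ha : 0 < a)
    (hk : k =O[⊤] fun u => exp (-a * u ^ 2)) (hF : ∀ y, |F y| ≤ A + B * |y|) (θ : ℝ) :
    ∃ bound : ℝ → ℝ, Integrable bound ∧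
      ∀ t ∈ Metric.ball θ 1, ∀ y, ‖k (y - t) * F y‖ ≤ bound y := by
  obtain ⟨C, hC, hkC⟩ := hk.exists_nonneg
  refine ⟨fun y => C * exp a * (exp (-(a / 2) * (y - θ) ^ 2) * (A + B * |y|)),
    (integrable_exp_neg_mul_sq_sub_mul (half_pos ha) θ A B).const_mul _, fun t ht y => ?_⟩
  have hkt : |k (y - t)| ≤ C * exp (-a * (y - t) ^ 2) := by
    simpa [norm_of_nonneg (exp_pos _).le] using isBigOWith_top.1 hkC (y - t)
  have hshift := exp_neg_mul_sq_sub_le ha.le (le_of_lt (by simpa [dist_eq] using ht)) y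
  rw [norm_mul, Real.norm_eq_abs, Real.norm_eq_abs]
  calc |k (y - t)| * |F y| ≤ C * exp (-a * (y - t) ^ 2) * (A + B * |y|) :=
        mul_le_mul hkt (hF y) (abs_nonneg _) (by positivity)
    _ ≤ C * (exp a * exp (-(a / 2) * (y - θ) ^ 2)) * (A + B * |y|) := by
        gcongr
        exact (abs_nonneg _).trans (hF y)
    _ = _ := by ring

theorem hasDerivAt_integral_comp_sub_mul {k k' F : ℝ → ℝ} {a A B : ℝ} (ha : 0 < a)
    (hk : ∀ u, HasDerivAt k (k' u) u)
    (hk_decay : k =O[⊤] fun u => exp (-a * u ^ 2)) (hk'_decay : k' =O[⊤] fun u => exp (-a * u ^ 2))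
    (hFm : AEStronglyMeasurable F) (hF : ∀ y, |F y| ≤ A + B * |y|) (θ : ℝ) :
    HasDerivAt (fun t => ∫ y, k (y - t) * F y) (-∫ y, k' (y - θ) * F y) θ := by
  have hk'_eq : k' = deriv k := funext fun u => (hk u).deriv.symm
  have hk_meas : ∀ t, AEStronglyMeasurable fun y => k (y - t) * F y := fun t =>
    ((continuous_iff_continuousAt.2 fun u => (hk u).continuousAt).comp
      (continuous_sub_right t)).aestronglyMeasurable.mul hFm
  have hk'_meas : AEStronglyMeasurable fun y => -k' (y - θ) * F y := by
    rw [hk'_eq]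
    exact (((measurable_deriv k).comp (measurable_sub_const θ)).neg.aestronglyMeasurable).mul hFm
  obtain ⟨bound, hbound, hbound_le⟩ := exists_integrable_bound_comp_sub_mul ha hk'_decay hF θ
  obtain ⟨bound₀, hbound₀, hbound₀_le⟩ := exists_integrable_bound_comp_sub_mul ha hk_decay hF θ
  have hint : Integrable fun y => k (y - θ) * F y :=
    hbound₀.mono' (hk_meas θ) (ae_of_all _ (hbound₀_le θ (Metric.mem_ball_self one_pos)))
  have hderiv : ∀ y t, HasDerivAt (fun t => k (y - t) * F y) (-k' (y - t) * F y) t := fun y t => by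
    simpa using ((hk (y - t)).comp t ((hasDerivAt_id t).const_sub y)).mul_const (F y)
  have hdom := (hasDerivAt_integral_of_dominated_loc_of_deriv_le (Metric.ball_mem_nhds θ one_pos)
    (Eventually.of_forall hk_meas) hint hk'_meas
    (ae_of_all _ fun y t ht => by simpa using hbound_le t ht y) hbound
    (ae_of_all _ fun y t _ => hderiv y t)).2
  simpa [integral_neg] using hdom

noncomputable def quadGaussian (a c₀ c₁ c₂ u : ℝ) : ℝ :=
  (c₀ + c₁ * u + c₂ * u ^ 2) * exp (-a * u ^ 2)

lemma hasDerivAt_quadGaussian (a c₀ c₁ u : ℝ) :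
    HasDerivAt (quadGaussian a c₀ c₁ 0)
      (quadGaussian a c₁ (-2 * a * c₀) (-2 * a * c₁) u) u := by
  have hp : HasDerivAt (fun u => c₀ + c₁ * u + 0 * u ^ 2) c₁ u := by
    simpa using ((hasDerivAt_id u).const_mul c₁).const_add c₀
  have he : HasDerivAt (fun u => exp (-a * u ^ 2)) (exp (-a * u ^ 2) * (-a * (2 * u))) u := by
    simpa using (((hasDerivAt_id u).pow 2).const_mul (-a)).exp
  refine (hp.mul he).congr_deriv ?_
  simp only [quadGaussian]
  ring

lemma quadGaussian_isBigO {a : ℝ} (ha : 0 < a) (c₀ c₁ c₂ : ℝ) :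
    quadGaussian a c₀ c₁ c₂ =O[⊤] fun u => exp (-(a / 2) * u ^ 2) := by
  refine isBigO_top.2 ⟨|c₀| + |c₁| * (1 + 2 / a) + |c₂| * (2 / a), fun u => ?_⟩
  set s := 1 + a / 2 * u ^ 2 with hs
  have hsq : u ^ 2 = 2 / a * (s - 1) := by rw [hs]; field_simp; ring
  have hs_le : s ≤ exp (a / 2 * u ^ 2) := by rw [hs, add_comm]; exact add_one_le_exp _
  have hpoly : |c₀ + c₁ * u + c₂ * u ^ 2| ≤ (|c₀| + |c₁| * (1 + 2 / a) + |c₂| * (2 / a)) * s := by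
    have hs1 : 1 ≤ s := by rw [hs]; nlinarith [sq_nonneg u]
    have habs : |u| ≤ (1 + 2 / a) * s := by
      nlinarith [sq_abs u, sq_nonneg (|u| - 1), div_pos two_pos ha]
    calc |c₀ + c₁ * u + c₂ * u ^ 2| ≤ |c₀| + |c₁| * |u| + |c₂| * u ^ 2 := by
          refine (abs_add_three _ _ _).trans_eq ?_
          rw [abs_mul, abs_mul, abs_of_nonneg (sq_nonneg u)]
      _ ≤ |c₀| * s + |c₁| * ((1 + 2 / a) * s) + |c₂| * (2 / a * (s - 1)) := by
          rw [← hsq]; gcongr; nlinarith [abs_nonneg c₀]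
      _ ≤ _ := by nlinarith [abs_nonneg c₂, div_pos two_pos ha]
  have hexp : exp (a / 2 * u ^ 2) * exp (-a * u ^ 2) = exp (-(a / 2) * u ^ 2) := by
    rw [← exp_add]; ring_nf
  simp only [quadGaussian, norm_mul, Real.norm_eq_abs, abs_of_pos (exp_pos _)]
  calc |c₀ + c₁ * u + c₂ * u ^ 2| * exp (-a * u ^ 2)
      ≤ (|c₀| + |c₁| * (1 + 2 / a) + |c₂| * (2 / a)) * s * exp (-a * u ^ 2) := by gcongr
    _ ≤ (|c₀| + |c₁| * (1 + 2 / a) + |c₂| * (2 / a)) * exp (a / 2 * u ^ 2) * exp (-a * u ^ 2) := by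
        gcongr
    _ = _ := by rw [mul_assoc, hexp]

lemma integral_comp_add_mul_gaussianReal {ε : ℝ} (hε : ε ≠ 0) (G : ℝ → ℝ) (t : ℝ) :
    ∫ z, G (t + ε * z) ∂gaussianReal 0 1 =
      ∫ y, quadGaussian (1 / (2 * ε ^ 2)) (√(2 * π * ε ^ 2))⁻¹ 0 0 (y - t) * G y := by
  obtain ⟨V, hV⟩ : ∃ V : NNReal, (V : ℝ) = ε ^ 2 := ⟨⟨ε ^ 2, sq_nonneg ε⟩, rfl⟩
  have hemb : MeasurableEmbedding fun z => t + ε * z :=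
    ((Homeomorph.mulLeft₀ ε hε).trans (Homeomorph.addLeft t)).measurableEmbedding
  have hmap : (gaussianReal 0 1).map (fun z => t + ε * z) = gaussianReal t V := by
    have hcomp : (fun z => t + ε * z) = (t + ·) ∘ (ε * ·) := rfl
    rw [hcomp, ← Measure.map_map (measurable_const_add t) (measurable_const_mul ε),
      gaussianReal_map_const_mul, gaussianReal_map_const_add]
    congr
    · simp
    · ext; simp [hV]
  have hV0 : V ≠ 0 := by rw [← NNReal.coe_ne_zero, hV]; positivity
  rw [← hemb.integral_map, hmap, integral_gaussianReal_eq_integral_smul hV0]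
  congr 1 with y
  simp only [gaussianPDFReal_def, quadGaussian, hV, smul_eq_mul]
  rw [show -(y - t) ^ 2 / (2 * ε ^ 2) = -(1 / (2 * ε ^ 2)) * (y - t) ^ 2 by ring]
  ring

lemma LipschitzWith.abs_le_add_mul_abs {F : ℝ → ℝ} {K : NNReal} (hF : LipschitzWith K F) (y : ℝ) :
    |F y| ≤ |F 0| + K * |y| := by
  have := hF.dist_le_mul y 0
  rw [dist_eq, dist_eq, sub_zero] at this
  linarith [abs_sub_abs_le_abs_sub (F y) (F 0)]

/-- Gaussian smoothing of a Lipschitz function is twice differentiable, with second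
derivative `F_ε''(θ) = (1/ε²) ∫ F(θ + ε z) (z² − 1) dγ(z)` where `γ` is the standard
Gaussian on `ℝ`. -/
theorem gaussian_smoothing_second_deriv
    (F : ℝ → ℝ) {K : NNReal} (hF : LipschitzWith K F)
    (ε : ℝ) (hε : 0 < ε) :
    (∀ θ : ℝ, DifferentiableAt ℝ (fun t => ∫ z, F (t + ε * z) ∂(gaussianReal 0 1)) θ) ∧
    (∀ θ : ℝ, HasDerivAt (deriv (fun t => ∫ z, F (t + ε * z) ∂(gaussianReal 0 1)))
      ((1 / ε ^ 2) * ∫ z, F (θ + ε * z) * (z ^ 2 - 1) ∂(gaussianReal 0 1)) θ) := by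
  have hrepr := integral_comp_add_mul_gaussianReal hε.ne'
  set a := 1 / (2 * ε ^ 2)
  set c := (√(2 * π * ε ^ 2))⁻¹
  have ha : 0 < a := by positivity
  have hderiv_int : ∀ c₀ c₁ θ, HasDerivAt (fun t => ∫ y, quadGaussian a c₀ c₁ 0 (y - t) * F y)
      (-∫ y, quadGaussian a c₁ (-2 * a * c₀) (-2 * a * c₁) (y - θ) * F y) θ := fun c₀ c₁ θ =>
    hasDerivAt_integral_comp_sub_mul (half_pos ha) (hasDerivAt_quadGaussian a c₀ c₁)
      (quadGaussian_isBigO ha _ _ _) (quadGaussian_isBigO ha _ _ _)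
      hF.continuous.aestronglyMeasurable hF.abs_le_add_mul_abs θ
  have h1 : ∀ t, HasDerivAt (fun t => ∫ z, F (t + ε * z) ∂gaussianReal 0 1)
      (-∫ y, quadGaussian a 0 (-2 * a * c) 0 (y - t) * F y) t := fun t => by
    simpa only [hrepr, mul_zero] using hderiv_int c 0 t
  refine ⟨fun θ => (h1 θ).differentiableAt, fun θ => ?_⟩
  rw [show deriv _ = _ from funext fun t => (h1 t).deriv]
  refine (hderiv_int 0 (-2 * a * c) θ).neg.congr_deriv ?_
  have hG := hrepr (fun y => 1 / ε ^ 2 * (F y * (((y - θ) / ε) ^ 2 - 1))) θ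
  simp only [add_sub_cancel_left, mul_div_cancel_left₀ _ hε.ne'] at hG
  rw [neg_neg, ← integral_const_mul, hG]
  congr 1 with y
  simp only [quadGaussian, a]
  field_simp
  ring
end

section
/- Let n be a positive natural number and let γⁿ denote the standard Gaussian measure on ℝⁿ, i.e., the n-fold product of the one-dimensional Gaussian measure with mean 0 and variance 1. Let F : ℝⁿ → ℝ be Lipschitz continuous and let ε > 0. Define F_ε(θ) = ∫ F(θ + ε z) dγⁿ(z). Then F_ε is differentiable at every θ ∈ ℝⁿ, and for every direction v ∈ ℝⁿ its derivative satisfies DF_ε(θ)[v] = (1/ε) ∫ F(θ + ε z) · ⟨z, v⟩ dγⁿ(z), where ⟨·,·⟩ is the Euclidean inner product. -/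
/-!
Translating the standard Gaussian `γ` on `ℝⁿ` by `c` multiplies its density by the
Cameron–Martin factor `gaussianTilt c z = exp (⟪c, z⟫ - ‖c‖² / 2)`, so that
`F_ε (θ + ε c) = ∫ F (θ + ε z) · gaussianTilt c z dγ(z)`: the parameter has moved from the
merely Lipschitz `F` into the smooth factor, whose `c`-derivative at `0` is `⟪z, ·⟫`.
A Lipschitz `F` grows at most linearly, and for `‖c‖ ≤ 1` the `c`-derivative of the integrand
is dominated by a multiple of `exp (3 ∑ |zᵢ|)`, which is `γ`-integrable, so one may
differentiate under the integral sign and conclude by the chain rule in `c = (t - θ) / ε`.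
-/

open MeasureTheory ProbabilityTheory
open scoped ENNReal NNReal

namespace MeasureTheory

variable {ι : Type*} [Fintype ι] {X : ι → Type*} [∀ i, MeasurableSpace (X i)]
  {μ : (i : ι) → Measure (X i)} [∀ i, IsProbabilityMeasure (μ i)]

theorem lintegral_fintype_prod_eq_prod {f : (i : ι) → X i → ℝ≥0∞} (hf : ∀ i, Measurable (f i)) :
    ∫⁻ x, ∏ i, f i (x i) ∂Measure.pi μ = ∏ i, ∫⁻ y, f i y ∂μ i := by
  rw [lintegral_prod_eq_prod_lintegral_of_indepFun _ _
    (iIndepFun_pi fun i => (hf i).aemeasurable) fun i => (hf i).comp (measurable_pi_apply i)]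
  exact Finset.prod_congr rfl fun i _ => (measurePreserving_eval μ i).lintegral_comp (hf i)

theorem Measure.pi_withDensity {f : (i : ι) → X i → ℝ≥0∞} (hf : ∀ i, Measurable (f i))
    [∀ i, SigmaFinite ((μ i).withDensity (f i))] :
    Measure.pi (fun i => (μ i).withDensity (f i))
      = (Measure.pi μ).withDensity fun x => ∏ i, f i (x i) := by
  refine Measure.pi_eq fun s hs => ?_
  have h_box : (Set.univ.pi s).indicator (fun x => ∏ i, f i (x i))
      = fun x => ∏ i, (s i).indicator (f i) (x i) := by
    ext x
    classical
    simp only [Set.indicator_apply, Finset.prod_ite_zero]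
    congr 1
    simp
  rw [withDensity_apply _ (.univ_pi hs), ← lintegral_indicator (.univ_pi hs), h_box,
    lintegral_fintype_prod_eq_prod fun i => (hf i).indicator (hs i)]
  exact Finset.prod_congr rfl fun i _ => by
    rw [withDensity_apply _ (hs i), lintegral_indicator (hs i)]

end MeasureTheory

namespace ProbabilityTheory

theorem gaussianReal_eq_withDensity_exp (m : ℝ) :
    gaussianReal m 1
      = (gaussianReal 0 1).withDensity fun x => ENNReal.ofReal (Real.exp (m * x - m ^ 2 / 2)) := by
  rw [gaussianReal_of_var_ne_zero _ one_ne_zero, gaussianReal_of_var_ne_zero _ one_ne_zero,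
    ← withDensity_mul _ (measurable_gaussianPDF _ _) (by fun_prop)]
  congr 1
  ext x
  rw [Pi.mul_apply, gaussianPDF, gaussianPDF, ← ENNReal.ofReal_mul (gaussianPDFReal_nonneg _ _ _)]
  simp only [gaussianPDFReal, NNReal.coe_one, mul_assoc, ← Real.exp_add]
  congr 3
  ring

theorem integrable_exp_mul_abs_gaussianReal {μ : ℝ} {v : ℝ≥0} (a : ℝ) :
    Integrable (fun x => Real.exp (a * |x|)) (gaussianReal μ v) := by
  refine ((integrable_exp_mul_gaussianReal a).add (integrable_exp_mul_gaussianReal (-a))).mono'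
    (by fun_prop) (.of_forall fun x => ?_)
  rw [Real.norm_of_nonneg (Real.exp_pos _).le, Pi.add_apply]
  rcases abs_cases x with ⟨hx, _⟩ | ⟨hx, _⟩ <;> rw [hx]
  · linarith [Real.exp_pos (-a * x)]
  · rw [mul_neg, ← neg_mul]
    linarith [Real.exp_pos (a * x)]

variable {ι : Type*} [Fintype ι]

theorem integrable_exp_mul_sum_abs_pi_gaussianReal {μ : ι → ℝ} {v : ι → ℝ≥0} (a : ℝ) :
    Integrable (fun z : ι → ℝ => Real.exp (a * ∑ i, |z i|))
      (Measure.pi fun i => gaussianReal (μ i) (v i)) := by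
  simp_rw [Finset.mul_sum, Real.exp_sum]
  exact Integrable.fintype_prod fun _ => integrable_exp_mul_abs_gaussianReal a

local notation "γ" => Measure.pi fun _ => gaussianReal 0 1

noncomputable def gaussianTilt (c z : ι → ℝ) : ℝ := Real.exp (∑ i, (c i * z i - c i ^ 2 / 2))

theorem gaussianTilt_pos (c z : ι → ℝ) : 0 < gaussianTilt c z := Real.exp_pos _

@[simp]
theorem gaussianTilt_zero (z : ι → ℝ) : gaussianTilt 0 z = 1 := by
  simp [gaussianTilt]

theorem continuous_gaussianTilt (c : ι → ℝ) : Continuous (gaussianTilt c) := by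
  unfold gaussianTilt
  fun_prop

theorem pi_gaussianReal_eq_withDensity_gaussianTilt (c : ι → ℝ) :
    Measure.pi (fun i => gaussianReal (c i) 1)
      = (γ : Measure (ι → ℝ)).withDensity fun z => ENNReal.ofReal (gaussianTilt c z) := by
  have : ∀ i, SigmaFinite ((gaussianReal 0 1).withDensity
      fun x => ENNReal.ofReal (Real.exp (c i * x - c i ^ 2 / 2))) := fun i => by
    rw [← gaussianReal_eq_withDensity_exp]
    infer_instance
  rw [funext fun i => gaussianReal_eq_withDensity_exp (c i),
    Measure.pi_withDensity fun i => by fun_prop]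
  congr 1
  ext z
  rw [gaussianTilt, Real.exp_sum, ENNReal.ofReal_prod_of_nonneg fun i _ => (Real.exp_pos _).le]

theorem map_add_pi_gaussianReal (c : ι → ℝ) :
    (γ : Measure (ι → ℝ)).map (· + c) = Measure.pi fun i => gaussianReal (c i) 1 := by
  have h := Measure.pi_map_pi (μ := fun _ : ι => gaussianReal 0 1) (f := fun i x => x + c i)
    fun i => by fun_prop
  simp only [gaussianReal_map_add_const, zero_add] at h
  exact h

theorem integral_comp_add_pi_gaussianReal (g : (ι → ℝ) → ℝ) (c : ι → ℝ) :
    ∫ z, g (z + c) ∂γ = ∫ z, gaussianTilt c z * g z ∂γ := by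
  have h_map := (MeasurableEquiv.addRight c).measurableEmbedding.integral_map (μ := γ) g
  simp only [MeasurableEquiv.coe_addRight] at h_map
  rw [← h_map, map_add_pi_gaussianReal, pi_gaussianReal_eq_withDensity_gaussianTilt,
    integral_withDensity_eq_integral_toReal_smul
      (continuous_gaussianTilt c).measurable.ennreal_ofReal (by simp)]
  simp only [ENNReal.toReal_ofReal (gaussianTilt_pos c _).le, smul_eq_mul]

theorem integral_add_smul_pi_gaussianReal (F : (ι → ℝ) → ℝ) {ε : ℝ} (hε : ε ≠ 0)
    (θ t : ι → ℝ) :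
    ∫ z, F (t + ε • z) ∂γ = ∫ z, gaussianTilt (ε⁻¹ • (t - θ)) z * F (θ + ε • z) ∂γ := by
  rw [← integral_comp_add_pi_gaussianReal]
  congr 1
  funext z
  rw [smul_add, smul_inv_smul₀ hε]
  abel_nf

noncomputable def dotProductCLM (x : ι → ℝ) : (ι → ℝ) →L[ℝ] ℝ :=
  ∑ i, x i • ContinuousLinearMap.proj i

@[simp]
theorem dotProductCLM_apply (x v : ι → ℝ) : dotProductCLM x v = ∑ i, x i * v i := by
  simp [dotProductCLM]

theorem continuous_dotProductCLM : Continuous (dotProductCLM (ι := ι)) := by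
  unfold dotProductCLM
  fun_prop

theorem norm_dotProductCLM_le (x : ι → ℝ) : ‖dotProductCLM x‖ ≤ ∑ i, |x i| := by
  refine ContinuousLinearMap.opNorm_le_bound _ (by positivity) fun v => ?_
  rw [dotProductCLM_apply, Finset.sum_mul]
  refine (norm_sum_le _ _).trans (Finset.sum_le_sum fun i _ => ?_)
  rw [norm_mul, Real.norm_eq_abs]
  exact mul_le_mul_of_nonneg_left (norm_le_pi_norm v i) (abs_nonneg _)

theorem hasFDerivAt_gaussianTilt (c z : ι → ℝ) :
    HasFDerivAt (gaussianTilt · z) (gaussianTilt c z • dotProductCLM (z - c)) c := by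
  rw [dotProductCLM]
  refine HasFDerivAt.exp (HasFDerivAt.fun_sum fun i _ => ?_)
  have := ((hasFDerivAt_apply (𝕜 := ℝ) i c).mul_const (z i)).sub
    (((hasFDerivAt_apply (𝕜 := ℝ) i c).pow 2).mul_const (2⁻¹ : ℝ))
  convert this using 1
  · funext y
    simp only [Pi.sub_apply]
    ring
  · ext v
    simp only [smul_apply, FunLike.coe_sub,
      ContinuousLinearMap.proj_apply, Pi.sub_apply, smul_eq_mul, nsmul_eq_mul]
    ring

theorem pi_norm_le_sum_abs (z : ι → ℝ) : ‖z‖ ≤ ∑ i, |z i| :=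
  (pi_norm_le_iff_of_nonneg (by positivity)).mpr fun i =>
    Finset.single_le_sum (f := fun i => |z i|) (fun i _ => abs_nonneg _) (Finset.mem_univ i)

theorem abs_le_mul_exp_sum_abs {Φ : (ι → ℝ) → ℝ} {A B : ℝ} (hΦ : ∀ z, |Φ z| ≤ A + B * ‖z‖)
    (z : ι → ℝ) : |Φ z| ≤ (|A| + |B|) * Real.exp (∑ i, |z i|) := by
  have h₁ := Real.one_le_exp (by positivity : 0 ≤ ∑ i, |z i|)
  have h₂ := (le_add_of_nonneg_right zero_le_one).trans (Real.add_one_le_exp (∑ i, |z i|))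
  linarith [hΦ z, le_abs_self A, mul_le_mul_of_nonneg_right (le_abs_self B) (norm_nonneg z),
    mul_le_mul_of_nonneg_left (pi_norm_le_sum_abs z) (abs_nonneg B),
    mul_le_mul_of_nonneg_left h₁ (abs_nonneg A), mul_le_mul_of_nonneg_left h₂ (abs_nonneg B)]

theorem gaussianTilt_le_exp_sum_abs {c : ι → ℝ} (hc : ‖c‖ ≤ 1) (z : ι → ℝ) :
    gaussianTilt c z ≤ Real.exp (∑ i, |z i|) := by
  refine Real.exp_le_exp.mpr (Finset.sum_le_sum fun i _ => ?_)
  have hci : |c i| ≤ 1 := (norm_le_pi_norm c i).trans hc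
  have : c i * z i ≤ |z i| := (le_abs_self _).trans (by
    rw [abs_mul]
    exact mul_le_of_le_one_left (abs_nonneg _) hci)
  nlinarith [sq_nonneg (c i)]

theorem norm_dotProductCLM_sub_le {c : ι → ℝ} (hc : ‖c‖ ≤ 1) (z : ι → ℝ) :
    ‖dotProductCLM (z - c)‖ ≤ (1 + Fintype.card ι) * Real.exp (∑ i, |z i|) := by
  have h_sum : ∑ i, |(z - c) i| ≤ ∑ i, |z i| + Fintype.card ι := by
    rw [← Finset.card_univ, ← nsmul_one, ← Finset.sum_const, ← Finset.sum_add_distrib]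
    refine Finset.sum_le_sum fun i _ => (abs_sub _ _).trans ?_
    gcongr
    exact (norm_le_pi_norm c i).trans hc
  have h₁ := Real.one_le_exp (by positivity : 0 ≤ ∑ i, |z i|)
  have h₂ := (le_add_of_nonneg_right zero_le_one).trans (Real.add_one_le_exp (∑ i, |z i|))
  nlinarith [norm_dotProductCLM_le (z - c)]

theorem hasFDerivAt_integral_gaussianTilt_mul {Φ : (ι → ℝ) → ℝ} (hΦ : AEStronglyMeasurable Φ γ)
    {A B : ℝ} (hgrowth : ∀ z, |Φ z| ≤ A + B * ‖z‖) :
    Integrable (fun z => Φ z • dotProductCLM z) γ ∧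
      HasFDerivAt (fun c => ∫ z, gaussianTilt c z * Φ z ∂γ) (∫ z, Φ z • dotProductCLM z ∂γ) 0 := by
  set bound : (ι → ℝ) → ℝ :=
    fun z => (|A| + |B|) * (1 + Fintype.card ι) * Real.exp (3 * ∑ i, |z i|)
  have h_bound : ∀ z, ∀ c ∈ Metric.ball (0 : ι → ℝ) 1,
      ‖Φ z • (gaussianTilt c z • dotProductCLM (z - c))‖ ≤ bound z := by
    intro z c hc
    have hc : ‖c‖ ≤ 1 := (mem_ball_zero_iff.mp hc).le
    rw [norm_smul, norm_smul, Real.norm_eq_abs, Real.norm_of_nonneg (gaussianTilt_pos c z).le]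
    calc |Φ z| * (gaussianTilt c z * ‖dotProductCLM (z - c)‖)
        ≤ (|A| + |B|) * Real.exp (∑ i, |z i|) * (Real.exp (∑ i, |z i|)
            * ((1 + Fintype.card ι) * Real.exp (∑ i, |z i|))) := by
          gcongr
          exacts [mul_nonneg (gaussianTilt_pos c z).le (norm_nonneg _),
            abs_le_mul_exp_sum_abs hgrowth z, gaussianTilt_le_exp_sum_abs hc z,
            norm_dotProductCLM_sub_le hc z]
      _ = bound z := by
          simp only [bound]
          rw [show 3 * ∑ i, |z i| = ∑ i, |z i| + ∑ i, |z i| + ∑ i, |z i| by ring,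
            Real.exp_add, Real.exp_add]
          ring
  have h_int : Integrable bound γ := (integrable_exp_mul_sum_abs_pi_gaussianReal 3).const_mul _
  have h_meas : AEStronglyMeasurable (fun z => Φ z • dotProductCLM z) γ :=
    hΦ.fun_smul continuous_dotProductCLM.aestronglyMeasurable
  have hΦ_int : Integrable Φ γ :=
    ((integrable_exp_mul_sum_abs_pi_gaussianReal 1).const_mul _).mono' hΦ
      (.of_forall fun z => by simpa using abs_le_mul_exp_sum_abs hgrowth z)
  refine ⟨h_int.mono' h_meas (.of_forall fun z => by simpa using h_bound z 0 (by simp)), ?_⟩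
  simpa using hasFDerivAt_integral_of_dominated_of_fderiv_le (𝕜 := ℝ) (μ := γ)
    (F := fun c z => gaussianTilt c z * Φ z)
    (F' := fun c z => Φ z • (gaussianTilt c z • dotProductCLM (z - c)))
    (Metric.ball_mem_nhds 0 one_pos)
    (.of_forall fun c => (continuous_gaussianTilt c).aestronglyMeasurable.mul hΦ)
    (by simpa using hΦ_int) (by simpa using h_meas) (.of_forall h_bound) h_int
    (.of_forall fun z c _ => (hasFDerivAt_gaussianTilt c z).mul_const (Φ z))

end ProbabilityTheory

theorem gaussian_smoothing_hasFDerivAt_multidim_general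
    (n : ℕ)
    (F : (Fin n → ℝ) → ℝ) {K : NNReal} (hF : LipschitzWith K F)
    (ε : ℝ) (hε : 0 < ε) (θ : Fin n → ℝ) :
    ∃ D : (Fin n → ℝ) →L[ℝ] ℝ,
      HasFDerivAt
        (fun t => ∫ z, F (t + ε • z) ∂(Measure.pi fun _ : Fin n => gaussianReal 0 1)) D θ ∧
      ∀ v : Fin n → ℝ,
        D v = (1 / ε) *
          ∫ z, F (θ + ε • z) * (∑ i, z i * v i)
            ∂(Measure.pi fun _ : Fin n => gaussianReal 0 1) := by
  set Φ : (Fin n → ℝ) → ℝ := fun z => F (θ + ε • z)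
  have hΦ_growth : ∀ z, |Φ z| ≤ |F θ| + K * ‖ε‖ * ‖z‖ := fun z => by
    have h := hF.dist_le_mul (θ + ε • z) θ
    rw [dist_self_add_left, norm_smul, Real.dist_eq] at h
    linarith [abs_sub_abs_le_abs_sub (Φ z) (F θ)]
  obtain ⟨hΦ_int, hH⟩ := hasFDerivAt_integral_gaussianTilt_mul (Φ := Φ)
    (hF.continuous.comp (by fun_prop)).aestronglyMeasurable hΦ_growth
  have h_repr : (fun t => ∫ z, F (t + ε • z) ∂(Measure.pi fun _ : Fin n => gaussianReal 0 1))
      = fun t => ∫ z, gaussianTilt (ε⁻¹ • (t - θ)) z * Φ z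
          ∂(Measure.pi fun _ : Fin n => gaussianReal 0 1) :=
    funext fun t => integral_add_smul_pi_gaussianReal F hε.ne' θ t
  have h_param : HasFDerivAt (fun t : Fin n → ℝ => ε⁻¹ • (t - θ))
      (ε⁻¹ • ContinuousLinearMap.id ℝ (Fin n → ℝ)) θ :=
    ((hasFDerivAt_id θ).sub_const θ).const_smul ε⁻¹
  refine ⟨(∫ z, Φ z • dotProductCLM z ∂(Measure.pi fun _ : Fin n => gaussianReal 0 1)).comp
    (ε⁻¹ • ContinuousLinearMap.id ℝ (Fin n → ℝ)), ?_, fun v => ?_⟩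
  · rw [h_repr]
    exact (by simpa using hH : HasFDerivAt _ _ (ε⁻¹ • (θ - θ))).comp θ h_param
  · rw [ContinuousLinearMap.comp_apply, smul_apply, ContinuousLinearMap.id_apply, map_smul,
      ContinuousLinearMap.integral_apply hΦ_int, one_div, smul_eq_mul]
    simp [Φ, mul_comm]

/-- Multidimensional Gaussian smoothing of a Lipschitz function is differentiable, with
directional derivative given by the score-function formula
`DF_ε(θ)[v] = (1/ε) ∫ F(θ + ε z) ⟨z, v⟩ dγⁿ(z)`, where `γⁿ` is the standard Gaussian
measure on `ℝⁿ` (the `n`-fold product of the standard Gaussian on `ℝ`). -/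
theorem gaussian_smoothing_hasFDerivAt_multidim
    (n : ℕ) (hn : 0 < n)
    (F : (Fin n → ℝ) → ℝ) {K : NNReal} (hF : LipschitzWith K F)
    (ε : ℝ) (hε : 0 < ε) (θ : Fin n → ℝ) :
    ∃ D : (Fin n → ℝ) →L[ℝ] ℝ,
      HasFDerivAt
        (fun t => ∫ z, F (t + ε • z) ∂(Measure.pi fun _ : Fin n => gaussianReal 0 1)) D θ ∧
      ∀ v : Fin n → ℝ,
        D v = (1 / ε) *
          ∫ z, F (θ + ε • z) * (∑ i, z i * v i)
            ∂(Measure.pi fun _ : Fin n => gaussianReal 0 1) :=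
  gaussian_smoothing_hasFDerivAt_multidim_general n F hF ε hε θ
end

section
/- Let n be a positive natural number, let Y be a nonempty finite set of vectors in ℝⁿ, define F : ℝⁿ → ℝ by F(θ) = max_{y ∈ Y} ⟨y, θ⟩, let ε > 0, and let γⁿ denote the standard Gaussian measure on ℝⁿ (the n-fold product of the one-dimensional standard Gaussian). Define F_ε(θ) = ∫ F(θ + ε z) dγⁿ(z). Then F_ε is differentiable at every θ ∈ ℝⁿ, and for every direction v ∈ ℝⁿ, DF_ε(θ)[v] = ∫ (DF(θ + ε z))[v] dγⁿ(z), where DF(x) denotes the (Fréchet) derivative of F at x, which exists for γⁿ-almost every perturbed point θ + ε z (at points of non-differentiability any fixed value, e.g. 0, may be used without affecting the integral). -/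
/-!
`F(θ) = max_{y ∈ Y} ⟨y, θ⟩` is a maximum of finitely many linear forms, hence Lipschitz, so by
Rademacher's theorem it is differentiable Lebesgue-almost everywhere. The map `z ↦ θ + ε z` is an
affine bijection and the standard Gaussian measure is absolutely continuous, so `F` is
differentiable at `θ + ε z` for `γⁿ`-almost every `z`. The difference quotients of
`t ↦ F(t + ε z)` are bounded by the Lipschitz constant and the Gaussian measure is finite, so
dominated convergence lets us differentiate under the integral sign; the Gaussian's finite first
moment makes `z ↦ F(θ + ε z)` integrable in the first place.
-/

open MeasureTheory ProbabilityTheory Filter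
open scoped NNReal

theorem LipschitzWith.finset_sup' {α ι : Type*} [PseudoEMetricSpace α] {s : Finset ι}
    (hs : s.Nonempty) {f : ι → α → ℝ} {K : ℝ≥0} (hf : ∀ i ∈ s, LipschitzWith K (f i)) :
    LipschitzWith K fun x => s.sup' hs fun i => f i x := by
  simp_rw [← Finset.sup'_apply]
  refine Finset.sup'_induction hs f (fun g hg h hh => ?_) hf
  have := hg.max hh
  rwa [max_self] at this

namespace MeasureTheory.Measure

theorem AbsolutelyContinuous.pi_fin {n : ℕ} {α : Fin n → Type*} [∀ i, MeasurableSpace (α i)]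
    {μ ν : ∀ i, Measure (α i)} [∀ i, SigmaFinite (μ i)] [∀ i, SigmaFinite (ν i)]
    (h : ∀ i, μ i ≪ ν i) : Measure.pi μ ≪ Measure.pi ν := by
  induction n with
  | zero => rw [Measure.pi_of_empty μ, Measure.pi_of_empty ν]
  | succ n ih =>
    rw [← (measurePreserving_piFinSuccAbove μ 0).symm.map_eq,
      ← (measurePreserving_piFinSuccAbove ν 0).symm.map_eq]
    exact ((h 0).prod (ih fun j => h _)).map (MeasurableEquiv.measurable _)

theorem AbsolutelyContinuous.pi {ι : Type*} [Fintype ι] {α : ι → Type*}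
    [∀ i, MeasurableSpace (α i)] {μ ν : ∀ i, Measure (α i)} [∀ i, SigmaFinite (μ i)]
    [∀ i, SigmaFinite (ν i)] (h : ∀ i, μ i ≪ ν i) : Measure.pi μ ≪ Measure.pi ν := by
  let e := (Fintype.equivFin ι).symm
  rw [← (measurePreserving_piCongrLeft μ e).map_eq, ← (measurePreserving_piCongrLeft ν e).map_eq]
  exact (AbsolutelyContinuous.pi_fin fun i => h (e i)).map (MeasurableEquiv.measurable _)

end MeasureTheory.Measure

section Smoothing

variable {E G : Type*} [NormedAddCommGroup E] [MeasurableSpace E] [BorelSpace E]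
  [NormedAddCommGroup G]

theorem LipschitzWith.integrable_of_integrable_norm {f : E → G} {C : ℝ≥0}
    [SecondCountableTopologyEither E G] (hf : LipschitzWith C f) {μ : Measure E}
    [IsFiniteMeasure μ] (hμ : Integrable (fun z => ‖z‖) μ) : Integrable f μ := by
  refine ((integrable_const ‖f 0‖).add (hμ.const_mul C)).mono'
    hf.continuous.aestronglyMeasurable (ae_of_all _ fun z => ?_)
  calc ‖f z‖ ≤ ‖f 0‖ + ‖f z - f 0‖ := norm_le_norm_add_norm_sub' _ _
    _ ≤ ‖f 0‖ + C * ‖z‖ := by simpa using hf.norm_sub_le z 0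

variable [NormedSpace ℝ E] [NormedSpace ℝ G] [FiniteDimensional ℝ E] [FiniteDimensional ℝ G]

theorem LipschitzWith.ae_differentiableAt_add_smul {f : E → G} {C : ℝ≥0}
    (hf : LipschitzWith C f) {μ ν : Measure E} [ν.IsAddHaarMeasure] (hμ : μ ≪ ν) (θ : E)
    {ε : ℝ} (hε : ε ≠ 0) : ∀ᵐ z ∂μ, DifferentiableAt ℝ f (θ + ε • z) :=
  have haffine : Measure.QuasiMeasurePreserving (fun z => θ + ε • z) ν ν :=
    (measurePreserving_add_left ν θ).quasiMeasurePreserving.comp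
      (Measure.quasiMeasurePreserving_smul ν hε)
  hμ.ae_le (haffine.ae hf.ae_differentiableAt)

theorem LipschitzWith.hasFDerivAt_integral_comp_add_smul {f : E → G} {C : ℝ≥0}
    (hf : LipschitzWith C f) {μ : Measure E} [IsFiniteMeasure μ]
    (hμ : Integrable (fun z => ‖z‖) μ) (θ : E) (ε : ℝ)
    (hdiff : ∀ᵐ z ∂μ, DifferentiableAt ℝ f (θ + ε • z)) :
    Integrable (fun z => fderiv ℝ f (θ + ε • z)) μ ∧
      HasFDerivAt (fun t => ∫ z, f (t + ε • z) ∂μ) (∫ z, fderiv ℝ f (θ + ε • z) ∂μ) θ := by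
  have hshift (z : E) : LipschitzWith C fun t => f (t + ε • z) := by
    simpa [Function.comp_def] using hf.comp (IsometryEquiv.addRight (ε • z)).isometry.lipschitz
  have hdilate : LipschitzWith (C * ‖ε‖₊) fun z => f (θ + ε • z) :=
    hf.comp (((IsometryEquiv.addLeft θ).isometry.lipschitz.comp (lipschitzWith_smul ε)).weaken
      (by simp))
  refine hasFDerivAt_integral_of_dominated_loc_of_lip (bound := fun _ => (C : ℝ))
    univ_mem (Eventually.of_forall fun t => ?_)
    (hdilate.integrable_of_integrable_norm hμ)
    ((measurable_fderiv ℝ f).comp (by fun_prop)).aestronglyMeasurable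
    (ae_of_all _ fun z => by simpa using hshift z) (integrable_const _) ?_
  · have : Continuous fun z : E => t + ε • z := by fun_prop
    exact (hf.continuous.comp this).aestronglyMeasurable
  · filter_upwards [hdiff] with z hz
    exact (hasFDerivAt_comp_add_right _).2 hz.hasFDerivAt

end Smoothing

theorem gaussian_smoothing_fderiv_eq_integral_fderiv_general
    (n : ℕ)
    (Y : Finset (Fin n → ℝ)) (hY : Y.Nonempty)
    (ε : ℝ) (hε : 0 < ε) (θ : Fin n → ℝ) :
    ∃ D : (Fin n → ℝ) →L[ℝ] ℝ,
      HasFDerivAt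
        (fun t => ∫ z, (Y.sup' hY fun y => ∑ i, y i * (t i + ε * z i))
          ∂(Measure.pi fun _ : Fin n => gaussianReal 0 1)) D θ ∧
      ∀ v : Fin n → ℝ,
        D v = ∫ z, (fderiv ℝ (fun t => Y.sup' hY fun y => ∑ i, y i * t i) (θ + ε • z)) v
          ∂(Measure.pi fun _ : Fin n => gaussianReal 0 1) := by
  let ℓ (y : Fin n → ℝ) : (Fin n → ℝ) →L[ℝ] ℝ :=
    LinearMap.toContinuousLinearMap (dotProductBilin ℝ ℝ y)
  have hF : LipschitzWith (Y.sup' hY fun y => ‖ℓ y‖₊) fun t => Y.sup' hY fun y => ℓ y t :=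
    LipschitzWith.finset_sup' hY fun y hy =>
      (ℓ y).lipschitz.weaken (Finset.le_sup' (fun y => ‖ℓ y‖₊) hy)
  have hγ : (Measure.pi fun _ : Fin n => gaussianReal 0 1) ≪ volume :=
    Measure.AbsolutelyContinuous.pi fun _ => gaussianReal_absolutelyContinuous 0 one_ne_zero
  have hmoment : Integrable (fun z => ‖z‖) (Measure.pi fun _ : Fin n => gaussianReal 0 1) :=
    (Integrable.of_eval fun _ => integrable_eval IsGaussian.integrable_id).norm
  obtain ⟨hint, hderiv⟩ := hF.hasFDerivAt_integral_comp_add_smul hmoment θ ε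
    (hF.ae_differentiableAt_add_smul hγ θ hε.ne')
  exact ⟨_, hderiv, fun v => ContinuousLinearMap.integral_apply hint v⟩

/-- Differentiation under the Gaussian integral for a finite max of linear functions:
the Gaussian smoothing `F_ε(θ) = ∫ F(θ + ε z) dγⁿ(z)` of `F(θ) = max_{y ∈ Y} ⟨y, θ⟩` is
differentiable everywhere, and its derivative in direction `v` is the integral of the
derivative of `F` at the perturbed points (using Lean's `fderiv`, which takes the junk
value `0` at the measure-zero set of points of non-differentiability). -/
theorem gaussian_smoothing_fderiv_eq_integral_fderiv
    (n : ℕ) (hn : 0 < n)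
    (Y : Finset (Fin n → ℝ)) (hY : Y.Nonempty)
    (ε : ℝ) (hε : 0 < ε) (θ : Fin n → ℝ) :
    ∃ D : (Fin n → ℝ) →L[ℝ] ℝ,
      HasFDerivAt
        (fun t => ∫ z, (Y.sup' hY fun y => ∑ i, y i * (t i + ε * z i))
          ∂(Measure.pi fun _ : Fin n => gaussianReal 0 1)) D θ ∧
      ∀ v : Fin n → ℝ,
        D v = ∫ z, (fderiv ℝ (fun t => Y.sup' hY fun y => ∑ i, y i * t i) (θ + ε • z)) v
          ∂(Measure.pi fun _ : Fin n => gaussianReal 0 1) :=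
  gaussian_smoothing_fderiv_eq_integral_fderiv_general n Y hY ε hε θ
end
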